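/- For every real number ν with 0 < ν < 1, one has 1 + (log ν)/(1-ν) ≤ -(10/21)(1-ν). -/

import Mathlib

open Real

/-- The first two terms of the Mercator series `-log (1 - x) = ∑ xⁿ⁺¹/(n+1)`, whose terms are
nonnegative for `0 ≤ x`. -/
lemma Real.log_one_sub_le_neg_sub_sq_div_two {x : ℝ} (hx0 : 0 ≤ x) (hx1 : x < 1) :
    log (1 - x) ≤ -x - x ^ 2 / 2 := by
  have hsum := hasSum_pow_div_log_of_abs_lt_one (abs_lt.mpr ⟨by linarith, hx1⟩)
  have hpartial : ∑ n ∈ Finset.range 2, x ^ (n + 1) / (n + 1) ≤ -log (1 - x) :=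
    sum_le_hasSum _ (fun n _ => by positivity) hsum
  norm_num [Finset.sum_range_succ] at hpartial
  linarith

/-- For `0 < ν < 1`, one has `1 + (log ν)/(1-ν) ≤ -(10/21)(1-ν)`. -/
theorem one_add_log_div_le (ν : ℝ) (hν0 : 0 < ν) (hν1 : ν < 1) :
    1 + Real.log ν / (1 - ν) ≤ -(10 / 21) * (1 - ν) := by
  have hpos : 0 < 1 - ν := by linarith
  have hlog : log ν ≤ -(1 - ν) - (1 - ν) ^ 2 / 2 := by
    simpa using log_one_sub_le_neg_sub_sq_div_two hpos.le (by linarith : 1 - ν < 1)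
  have hdiv : log ν / (1 - ν) ≤ -1 - (1 - ν) / 2 := by
    rw [div_le_iff₀ hpos]
    linarith
  linarith
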